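/- arXiv:1006.4818 — 4 statements merged into one kernel-verified Lean document; each statement's English description precedes it below -/
import Mathlib

section
/- Let x ∈ ℝ^m have support N := {i : x_i ≠ 0}, let T ⊆ {1,…,m} and set Δ := N \ T and Δ_e := T \ N. Let y = A x + w ∈ ℝ^n with ‖w‖₂ ≤ ε. If some δ < (√2 − 1)/2 is an (|N| + |Δ| + |Δ_e|)-restricted isometry bound for A, then every modified-CS estimate x̂ with known part T computed from y satisfies ‖x − x̂‖₂ ≤ C₁(δ)·ε ≤ 8.79·ε. -/
open Finset

attribute [local instance] Classical.propDecidable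

/-- Euclidean (ℓ2) norm of a finite real vector. -/
noncomputable def norm2 {k : ℕ} (v : Fin k → ℝ) : ℝ := Real.sqrt (∑ i, v i ^ 2)

/-- ℓ∞ norm (maximum absolute entry) of a finite real vector. -/
noncomputable def normInf {k : ℕ} (v : Fin k → ℝ) : ℝ := ⨆ i, |v i|

/-- Support of a vector, as a finset. -/
noncomputable def spt {k : ℕ} (v : Fin k → ℝ) : Finset (Fin k) :=
  Finset.univ.filter (fun i => v i ≠ 0)

/-- Restriction of a vector to the coordinates indexed by `T` (zero elsewhere). -/
noncomputable def restr {k : ℕ} (T : Finset (Fin k)) (v : Fin k → ℝ) : Fin k → ℝ :=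
  fun i => if i ∈ T then v i else 0

/-- `δ ∈ [0,1)` is an `S`-restricted isometry bound for `A`:
`(1-δ)‖z‖² ≤ ‖Az‖² ≤ (1+δ)‖z‖²` for every `z` with at most `S` nonzero entries. -/
def RIPBound {n m : ℕ} (A : Matrix (Fin n) (Fin m) ℝ) (S : ℕ) (δ : ℝ) : Prop :=
  0 ≤ δ ∧ δ < 1 ∧
    ∀ z : Fin m → ℝ, (spt z).card ≤ S →
      (1 - δ) * (∑ i, z i ^ 2) ≤ (∑ j, (A.mulVec z) j ^ 2) ∧
      (∑ j, (A.mulVec z) j ^ 2) ≤ (1 + δ) * (∑ i, z i ^ 2)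

/-- `θ ≥ 0` is an `(S,S')`-restricted orthogonality bound for `A`:
`|⟨Az, Az'⟩| ≤ θ‖z‖‖z'‖` for all `z, z'` with disjoint supports of cardinalities `≤ S, S'`. -/
def ROBound {n m : ℕ} (A : Matrix (Fin n) (Fin m) ℝ) (S S' : ℕ) (θ : ℝ) : Prop :=
  0 ≤ θ ∧
    ∀ z z' : Fin m → ℝ, Disjoint (spt z) (spt z') →
      (spt z).card ≤ S → (spt z').card ≤ S' →
      |∑ j, (A.mulVec z) j * (A.mulVec z') j| ≤ θ * norm2 z * norm2 z'

/-- A modified-CS estimate with known part `T`: feasible and with minimal ℓ1 norm outside `T`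
among all feasible vectors. -/
def ModCS {n m : ℕ} (A : Matrix (Fin n) (Fin m) ℝ) (y : Fin n → ℝ) (ε : ℝ)
    (T : Finset (Fin m)) (xhat : Fin m → ℝ) : Prop :=
  norm2 (fun j => y j - (A.mulVec xhat) j) ≤ ε ∧
    ∀ β : Fin m → ℝ, norm2 (fun j => y j - (A.mulVec β) j) ≤ ε →
      ∑ i ∈ Tᶜ, |xhat i| ≤ ∑ i ∈ Tᶜ, |β i|

/-- The LS estimate on `T` from `y`: supported on `T` and satisfying the normal equations
`A_Tᵀ (y - A x̂) = 0` (equivalently `x̂_T = (A_Tᵀ A_T)⁻¹ A_Tᵀ y` when `A_T` has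
full column rank). -/
def IsLS {n m : ℕ} (A : Matrix (Fin n) (Fin m) ℝ) (y : Fin n → ℝ)
    (T : Finset (Fin m)) (xhat : Fin m → ℝ) : Prop :=
  (∀ i, i ∉ T → xhat i = 0) ∧
    ∀ i ∈ T, (∑ j, A j i * (y j - (A.mulVec xhat) j)) = 0

/-- `C₁(δ) = 4√(1+δ)/(1-(√2+1)δ)`. -/
noncomputable def C1 (δ : ℝ) : ℝ := 4 * Real.sqrt (1 + δ) / (1 - (Real.sqrt 2 + 1) * δ)

/-- `C₂(δ) = 2(1+(√2-1)δ)/(1-(√2+1)δ)`. -/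
noncomputable def C2 (δ : ℝ) : ℝ := 2 * (1 + (Real.sqrt 2 - 1) * δ) / (1 - (Real.sqrt 2 + 1) * δ)

/-!
Write `h = x - x̂`. Since `x` is feasible, minimality of `x̂` outside `T` puts `h` in a cone: its
ℓ1 mass outside `T ∪ N` is at most its ℓ1 mass on `Δ`, hence at most `√|Δ| ‖h_Δ‖`. Cut the part of
`h` outside `T ∪ N` greedily into blocks of the `|Δ|` largest remaining entries, `T₁` being the
first one. Each later block has ℓ2 norm at most `√|Δ|` times its largest entry, hence at most the
ℓ1 norm of the previous block divided by `√|Δ|`; so the blocks after `T₁` have total ℓ2 norm at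
most `‖h_Δ‖ ≤ ‖h_{T ∪ N ∪ T₁}‖`. Feasibility of `x` and `x̂` gives `‖A h‖ ≤ 2ε`. The restricted
isometry on `T ∪ N ∪ T₁`, together with the near-orthogonality of `A` on disjoint sparse
supports that it implies, turns this into `(1 - (√2 + 1) δ) ‖h_{T ∪ N ∪ T₁}‖ ≤ 2 √(1 + δ) ε`,
and the tail at most doubles the norm.
-/

open Matrix

section Norm2

variable {k : ℕ}

lemma norm2_nonneg (v : Fin k → ℝ) : 0 ≤ norm2 v := Real.sqrt_nonneg _

lemma sq_norm2 (v : Fin k → ℝ) : norm2 v ^ 2 = ∑ i, v i ^ 2 :=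
  Real.sq_sqrt (by positivity)

lemma sq_norm2_eq_dotProduct (v : Fin k → ℝ) : norm2 v ^ 2 = v ⬝ᵥ v := by
  rw [sq_norm2]
  simp only [dotProduct, sq]

lemma smul_add_smul_dotProduct_self (a b : ℝ) (u v : Fin k → ℝ) :
    (a • u + b • v) ⬝ᵥ (a • u + b • v) =
      a ^ 2 * (u ⬝ᵥ u) + 2 * a * b * (u ⬝ᵥ v) + b ^ 2 * (v ⬝ᵥ v) := by
  simp only [add_dotProduct, dotProduct_add, smul_dotProduct, dotProduct_smul, smul_eq_mul,
    dotProduct_comm v u]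
  ring

lemma norm2_eq_norm (v : Fin k → ℝ) :
    norm2 v = ‖(WithLp.toLp 2 v : EuclideanSpace ℝ (Fin k))‖ := by
  simp [EuclideanSpace.norm_eq, norm2]

lemma norm2_eq_zero {v : Fin k → ℝ} : norm2 v = 0 ↔ v = 0 := by
  simp [norm2_eq_norm]

lemma norm2_add_le (u v : Fin k → ℝ) : norm2 (u + v) ≤ norm2 u + norm2 v := by
  simpa only [norm2_eq_norm, WithLp.toLp_add] using norm_add_le _ _

lemma norm2_sub_le (u v : Fin k → ℝ) : norm2 (u - v) ≤ norm2 u + norm2 v := by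
  simpa only [norm2_eq_norm, WithLp.toLp_sub] using norm_sub_le _ _

lemma norm2_list_sum_le (L : List (Fin k → ℝ)) : norm2 L.sum ≤ (L.map norm2).sum := by
  induction L with
  | nil => simp [norm2]
  | cons r L ih =>
    simp only [List.sum_cons, List.map_cons]
    linarith [norm2_add_le r L.sum]

lemma abs_dotProduct_le (u v : Fin k → ℝ) : |u ⬝ᵥ v| ≤ norm2 u * norm2 v := by
  simpa [norm2_eq_norm, EuclideanSpace.inner_eq_star_dotProduct, dotProduct_comm] using
    abs_real_inner_le_norm (WithLp.toLp 2 u : EuclideanSpace ℝ (Fin k)) (WithLp.toLp 2 v)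

end Norm2

section Restriction

variable {k : ℕ}

lemma spt_restr_subset (T : Finset (Fin k)) (v : Fin k → ℝ) : spt (restr T v) ⊆ T := by
  intro i hi
  by_contra h
  simp [spt, restr, h] at hi

lemma sq_norm2_restr (T : Finset (Fin k)) (v : Fin k → ℝ) :
    norm2 (restr T v) ^ 2 = ∑ i ∈ T, v i ^ 2 := by
  rw [sq_norm2]
  simp [restr, ite_pow, sum_ite_mem]

lemma norm2_restr_mono {T T' : Finset (Fin k)} (h : T ⊆ T') (v : Fin k → ℝ) :
    norm2 (restr T v) ≤ norm2 (restr T' v) := by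
  rw [← sq_le_sq₀ (norm2_nonneg _) (norm2_nonneg _), sq_norm2_restr, sq_norm2_restr]
  exact sum_le_sum_of_subset_of_nonneg h fun i _ _ => sq_nonneg _

lemma restr_union {T T' : Finset (Fin k)} (h : Disjoint T T') (v : Fin k → ℝ) :
    restr (T ∪ T') v = restr T v + restr T' v := by
  ext i
  by_cases hi : i ∈ T
  · simp [restr, hi, disjoint_left.mp h hi]
  · simp [restr, hi]

lemma restr_add_restr_compl (T : Finset (Fin k)) (v : Fin k → ℝ) :
    restr T v + restr Tᶜ v = v := by
  ext i
  by_cases hi : i ∈ T <;> simp [restr, hi]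

lemma sum_abs_le_sqrt_card_mul_norm2_restr (T : Finset (Fin k)) (v : Fin k → ℝ) :
    ∑ i ∈ T, |v i| ≤ √T.card * norm2 (restr T v) := by
  rw [← sq_le_sq₀ (by positivity) (mul_nonneg (by positivity) (norm2_nonneg _)), mul_pow,
    sq_norm2_restr, Real.sq_sqrt (by positivity)]
  simpa only [sq_abs] using sq_sum_le_card_mul_sum_sq (s := T) (f := fun i => |v i|)

lemma norm2_restr_add_norm2_restr_le {T T' : Finset (Fin k)} (h : Disjoint T T')
    (v : Fin k → ℝ) :
    norm2 (restr T v) + norm2 (restr T' v) ≤ √2 * norm2 (restr (T ∪ T') v) := by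
  have hsq : norm2 (restr T v) ^ 2 + norm2 (restr T' v) ^ 2 = norm2 (restr (T ∪ T') v) ^ 2 := by
    simp only [sq_norm2_restr, sum_union h]
  rw [← sq_le_sq₀ (add_nonneg (norm2_nonneg _) (norm2_nonneg _))
    (mul_nonneg (by positivity) (norm2_nonneg _)), mul_pow, Real.sq_sqrt zero_le_two]
  nlinarith [sq_nonneg (norm2 (restr T v) - norm2 (restr T' v))]

lemma sq_norm2_restr_le {T : Finset (Fin k)} {v : Fin k → ℝ} {b : ℝ}
    (hb : ∀ i ∈ T, |v i| ≤ b) : norm2 (restr T v) ^ 2 ≤ T.card * b ^ 2 := by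
  rw [sq_norm2_restr, ← nsmul_eq_mul]
  refine sum_le_card_nsmul _ _ _ fun i hi => ?_
  rw [← sq_abs]
  exact pow_le_pow_left₀ (abs_nonneg _) (hb i hi) 2

lemma spt_smul_add_smul_subset (a b : ℝ) (u v : Fin k → ℝ) :
    spt (a • u + b • v) ⊆ spt u ∪ spt v := by
  intro i hi
  by_contra h
  simp only [spt, mem_union, mem_filter, mem_univ, true_and, not_or, not_not] at h
  simp [spt, h.1, h.2] at hi

lemma dotProduct_eq_zero_of_disjoint_spt {u v : Fin k → ℝ} (h : Disjoint (spt u) (spt v)) :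
    u ⬝ᵥ v = 0 := by
  refine sum_eq_zero fun i _ => ?_
  by_contra hne
  exact disjoint_left.mp h (by simpa [spt] using left_ne_zero_of_mul hne)
    (by simpa [spt] using right_ne_zero_of_mul hne)

end Restriction

section RIP

variable {n m : ℕ} {A : Matrix (Fin n) (Fin m) ℝ} {S : ℕ} {δ : ℝ}

namespace RIPBound

lemma le_sq_norm2_mulVec (hRIP : RIPBound A S δ) {z : Fin m → ℝ} (hz : (spt z).card ≤ S) :
    (1 - δ) * norm2 z ^ 2 ≤ norm2 (A *ᵥ z) ^ 2 := by
  simpa only [sq_norm2] using (hRIP.2.2 z hz).1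

lemma sq_norm2_mulVec_le (hRIP : RIPBound A S δ) {z : Fin m → ℝ} (hz : (spt z).card ≤ S) :
    norm2 (A *ᵥ z) ^ 2 ≤ (1 + δ) * norm2 z ^ 2 := by
  simpa only [sq_norm2] using (hRIP.2.2 z hz).2

lemma norm2_mulVec_le (hRIP : RIPBound A S δ) {z : Fin m → ℝ} (hz : (spt z).card ≤ S) :
    norm2 (A *ᵥ z) ≤ √(1 + δ) * norm2 z := by
  rw [← sq_le_sq₀ (norm2_nonneg _) (mul_nonneg (Real.sqrt_nonneg _) (norm2_nonneg _)), mul_pow,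
    Real.sq_sqrt (by linarith [hRIP.1])]
  exact hRIP.sq_norm2_mulVec_le hz

/-- Polarization: with `a = ‖z‖`, `b = ‖z'‖`, the vectors `b z ± a z'` have squared norm
`2a²b²`, and the difference of their squared images is `4ab ⟪Az, Az'⟫`. -/
theorem roBound {s s' : ℕ} (hRIP : RIPBound A S δ) (hS : s + s' ≤ S) : ROBound A s s' δ := by
  refine ⟨hRIP.1, fun z z' hd hz hz' => ?_⟩
  change |(A *ᵥ z) ⬝ᵥ (A *ᵥ z')| ≤ δ * norm2 z * norm2 z'
  set a := norm2 z
  set b := norm2 z'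
  set X := (A *ᵥ z) ⬝ᵥ (A *ᵥ z')
  have hzz' : z ⬝ᵥ z' = 0 := dotProduct_eq_zero_of_disjoint_spt hd
  have bounds : ∀ σ : ℝ, σ ^ 2 = 1 →
      (1 - δ) * (2 * a ^ 2 * b ^ 2) ≤
        b ^ 2 * norm2 (A *ᵥ z) ^ 2 + 2 * σ * a * b * X + a ^ 2 * norm2 (A *ᵥ z') ^ 2 ∧
      b ^ 2 * norm2 (A *ᵥ z) ^ 2 + 2 * σ * a * b * X + a ^ 2 * norm2 (A *ᵥ z') ^ 2 ≤
        (1 + δ) * (2 * a ^ 2 * b ^ 2) := by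
    intro σ hσ
    have hcard : (spt (b • z + (σ * a) • z')).card ≤ S :=
      (card_le_card (spt_smul_add_smul_subset _ _ _ _)).trans ((card_union_le _ _).trans (by omega))
    have hp : norm2 (b • z + (σ * a) • z') ^ 2 = 2 * a ^ 2 * b ^ 2 := by
      rw [sq_norm2_eq_dotProduct, smul_add_smul_dotProduct_self, hzz', ← sq_norm2_eq_dotProduct,
        ← sq_norm2_eq_dotProduct]
      linear_combination a ^ 2 * b ^ 2 * hσ
    have hAp : norm2 (A *ᵥ (b • z + (σ * a) • z')) ^ 2 =
        b ^ 2 * norm2 (A *ᵥ z) ^ 2 + 2 * σ * a * b * X + a ^ 2 * norm2 (A *ᵥ z') ^ 2 := by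
      simp only [sq_norm2_eq_dotProduct]
      rw [mulVec_add, mulVec_smul, mulVec_smul, smul_add_smul_dotProduct_self]
      linear_combination a ^ 2 * ((A *ᵥ z') ⬝ᵥ (A *ᵥ z')) * hσ
    rw [← hp, ← hAp]
    exact ⟨hRIP.le_sq_norm2_mulVec hcard, hRIP.sq_norm2_mulVec_le hcard⟩
  obtain ⟨hlo_plus, hup_plus⟩ := bounds 1 (one_pow 2)
  obtain ⟨hlo_minus, hup_minus⟩ := bounds (-1) (by norm_num)
  have hX : a * b * X ≤ a * b * (δ * a * b) := by linarith
  have hnegX : a * b * (-X) ≤ a * b * (δ * a * b) := by linarith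
  rcases (mul_nonneg (norm2_nonneg z) (norm2_nonneg z')).eq_or_lt with hab | hab
  · rcases mul_eq_zero.mp hab.symm with h0 | h0
    · simp [X, a, h0, norm2_eq_zero.mp h0]
    · simp [X, b, h0, norm2_eq_zero.mp h0]
  · exact abs_le.mpr ⟨by linarith [le_of_mul_le_mul_left hnegX hab],
      le_of_mul_le_mul_left hX hab⟩

end RIPBound

lemma ROBound.abs_dotProduct_mulVec_list_sum_le {s s' : ℕ} {θ : ℝ} (hRO : ROBound A s s' θ)
    {z : Fin m → ℝ} (hz : (spt z).card ≤ s) {L : List (Fin m → ℝ)}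
    (hL : ∀ r ∈ L, Disjoint (spt z) (spt r) ∧ (spt r).card ≤ s') :
    |(A *ᵥ z) ⬝ᵥ (A *ᵥ L.sum)| ≤ θ * norm2 z * (L.map norm2).sum := by
  induction L with
  | nil => simp
  | cons r L ih =>
    simp only [List.forall_mem_cons] at hL
    rw [List.sum_cons, mulVec_add, dotProduct_add, List.map_cons, List.sum_cons, mul_add]
    exact (abs_add_le _ _).trans (add_le_add (hRO.2 z r hL.1.1 hz hL.1.2) (ih hL.2))

end RIP

section Recovery

variable {n m : ℕ} {A : Matrix (Fin n) (Fin m) ℝ} {S s : ℕ} {δ : ℝ}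
  {U V : Finset (Fin m)} {h : Fin m → ℝ} {L : List (Fin m → ℝ)}

lemma sum_map_norm2_nonneg (L : List (Fin m → ℝ)) : 0 ≤ (L.map norm2).sum :=
  List.sum_nonneg fun _ hx => by
    obtain ⟨r, -, rfl⟩ := List.mem_map.mp hx
    exact norm2_nonneg r

lemma RIPBound.abs_dotProduct_mulVec_restr_list_sum_le (hRIP : RIPBound A S δ)
    (hUV : Disjoint U V) (hU : U.card + s ≤ S) (hV : V.card ≤ s) (hs : s + s ≤ S)
    (hL : ∀ r ∈ L, Disjoint (U ∪ V) (spt r) ∧ (spt r).card ≤ s) :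
    |(A *ᵥ restr (U ∪ V) h) ⬝ᵥ (A *ᵥ L.sum)| ≤
      √2 * δ * norm2 (restr (U ∪ V) h) * (L.map norm2).sum := by
  have hLU : ∀ r ∈ L, Disjoint (spt (restr U h)) (spt r) ∧ (spt r).card ≤ s := fun r hr =>
    ⟨((hL r hr).1.mono_left subset_union_left).mono_left (spt_restr_subset U h), (hL r hr).2⟩
  have hLV : ∀ r ∈ L, Disjoint (spt (restr V h)) (spt r) ∧ (spt r).card ≤ s := fun r hr =>
    ⟨((hL r hr).1.mono_left subset_union_right).mono_left (spt_restr_subset V h), (hL r hr).2⟩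
  have hcrossU := (hRIP.roBound hU).abs_dotProduct_mulVec_list_sum_le
    (card_le_card (spt_restr_subset U h)) hLU
  have hcrossV := (hRIP.roBound hs).abs_dotProduct_mulVec_list_sum_le
    ((card_le_card (spt_restr_subset V h)).trans hV) hLV
  have hδη : 0 ≤ δ * (L.map norm2).sum := mul_nonneg hRIP.1 (sum_map_norm2_nonneg L)
  calc |(A *ᵥ restr (U ∪ V) h) ⬝ᵥ (A *ᵥ L.sum)|
      = |(A *ᵥ restr U h) ⬝ᵥ (A *ᵥ L.sum) + (A *ᵥ restr V h) ⬝ᵥ (A *ᵥ L.sum)| := by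
        rw [restr_union hUV, mulVec_add, add_dotProduct]
    _ ≤ |(A *ᵥ restr U h) ⬝ᵥ (A *ᵥ L.sum)| + |(A *ᵥ restr V h) ⬝ᵥ (A *ᵥ L.sum)| :=
        abs_add_le _ _
    _ ≤ δ * (L.map norm2).sum * (norm2 (restr U h) + norm2 (restr V h)) := by linarith
    _ ≤ δ * (L.map norm2).sum * (√2 * norm2 (restr (U ∪ V) h)) :=
        mul_le_mul_of_nonneg_left (norm2_restr_add_norm2_restr_le hUV h) hδη
    _ = √2 * δ * norm2 (restr (U ∪ V) h) * (L.map norm2).sum := by ring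

theorem RIPBound.norm2_le_C1_mul {ε : ℝ} (hRIP : RIPBound A S δ) (hδ : (√2 + 1) * δ < 1)
    (hUV : Disjoint U V) (hU : U.card + s ≤ S) (hV : V.card ≤ s) (hs : s + s ≤ S)
    (hL : ∀ r ∈ L, Disjoint (U ∪ V) (spt r) ∧ (spt r).card ≤ s)
    (hh : h = restr (U ∪ V) h + L.sum) (hη : (L.map norm2).sum ≤ norm2 (restr (U ∪ V) h))
    (hAh : norm2 (A *ᵥ h) ≤ 2 * ε) : norm2 h ≤ C1 δ * ε := by
  set g := restr (U ∪ V) h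
  have hε : 0 ≤ ε := by linarith [norm2_nonneg (A *ᵥ h)]
  have hg : (spt g).card ≤ S :=
    (card_le_card (spt_restr_subset _ _)).trans ((card_union_le U V).trans (by omega))
  have hsplit :
      norm2 (A *ᵥ g) ^ 2 = (A *ᵥ g) ⬝ᵥ (A *ᵥ h) - (A *ᵥ g) ⬝ᵥ (A *ᵥ L.sum) := by
    rw [sq_norm2_eq_dotProduct]
    rw [hh]
    rw [mulVec_add, dotProduct_add]
    ring
  have hAgh : (A *ᵥ g) ⬝ᵥ (A *ᵥ h) ≤ √(1 + δ) * norm2 g * (2 * ε) :=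
    (le_abs_self _).trans ((abs_dotProduct_le _ _).trans
      (mul_le_mul (hRIP.norm2_mulVec_le hg) hAh (norm2_nonneg _)
        (mul_nonneg (Real.sqrt_nonneg _) (norm2_nonneg g))))
  have hcross := hRIP.abs_dotProduct_mulVec_restr_list_sum_le (h := h) hUV hU hV hs hL
  have hη' : √2 * δ * norm2 g * (L.map norm2).sum ≤ √2 * δ * norm2 g * norm2 g :=
    mul_le_mul_of_nonneg_left hη (mul_nonneg (mul_nonneg (by positivity) hRIP.1) (norm2_nonneg g))
  have hkey : (1 - (√2 + 1) * δ) * norm2 g ≤ 2 * √(1 + δ) * ε := by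
    rcases (norm2_nonneg g).eq_or_lt with h0 | hpos
    · rw [← h0, mul_zero]
      exact mul_nonneg (by positivity) hε
    · refine le_of_mul_le_mul_left ?_ hpos
      nlinarith [hRIP.le_sq_norm2_mulVec hg, neg_abs_le ((A *ᵥ g) ⬝ᵥ (A *ᵥ L.sum))]
  have hhg : norm2 h ≤ 2 * norm2 g := calc
    norm2 h = norm2 (g + L.sum) := congrArg norm2 hh
    _ ≤ norm2 g + (L.map norm2).sum := by linarith [norm2_add_le g L.sum, norm2_list_sum_le L]
    _ ≤ 2 * norm2 g := by linarith
  rw [C1, div_mul_eq_mul_div, le_div_iff₀ (by linarith)]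
  nlinarith

end Recovery

section Decomposition

variable {k : ℕ}

lemma exists_top_subset (u : Fin k → ℝ) {s : ℕ} {F : Finset (Fin k)} (hs : s ≤ F.card) :
    ∃ T ⊆ F, T.card = s ∧ ∀ i ∈ T, ∀ j ∈ F \ T, |u j| ≤ |u i| := by
  induction s generalizing F with
  | zero => exact ⟨∅, empty_subset F, card_empty, by simp⟩
  | succ s ih =>
    obtain ⟨i₀, hi₀, hmax⟩ := F.exists_max_image (|u ·|) (card_pos.mp (by omega))
    obtain ⟨T, hTF, hTcard, htop⟩ :=
      ih (F := F.erase i₀) (by rw [card_erase_of_mem hi₀]; omega)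
    have hi₀T : i₀ ∉ T := fun h => notMem_erase i₀ F (hTF h)
    refine ⟨insert i₀ T, insert_subset hi₀ (hTF.trans (erase_subset _ _)),
      by rw [card_insert_of_notMem hi₀T, hTcard], fun i hi j hj => ?_⟩
    rw [mem_sdiff, mem_insert, not_or] at hj
    rcases mem_insert.mp hi with rfl | hi
    · exact hmax j hj.1
    · exact htop i hi j (mem_sdiff.mpr ⟨mem_erase.mpr ⟨hj.2.1, hj.1⟩, hj.2.2⟩)

lemma exists_sparse_decomposition {s : ℕ} (hs : 0 < s) (u : Fin k → ℝ) (F : Finset (Fin k)) :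
    ∃ T ⊆ F, T.card ≤ s ∧ ∃ L : List (Fin k → ℝ),
      (∀ r ∈ L, spt r ⊆ F \ T ∧ (spt r).card ≤ s) ∧
      restr F u = restr T u + L.sum ∧ √s * (L.map norm2).sum ≤ ∑ i ∈ F, |u i| := by
  induction F using Finset.strongInduction with
  | H F ih =>
  rcases le_or_gt F.card s with hF | hF
  · exact ⟨F, subset_rfl, hF, [], by simp, by simp, by simp; positivity⟩
  obtain ⟨T, hTF, hTcard, htop⟩ := exists_top_subset u hF.le
  obtain ⟨T', hT'F, hT'card, L, hL, hdecomp, hbound⟩ :=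
    ih _ (sdiff_ssubset hTF (card_pos.mp (hTcard ▸ hs)))
  obtain ⟨j₀, hj₀, hmax⟩ := (F \ T).exists_max_image (|u ·|)
    (card_pos.mp (by rw [card_sdiff_of_subset hTF]; omega))
  have head : √s * norm2 (restr T' u) ≤ ∑ i ∈ T, |u i| := by
    have hT' : norm2 (restr T' u) ^ 2 ≤ T'.card * |u j₀| ^ 2 :=
      sq_norm2_restr_le fun i hi => hmax i (hT'F hi)
    have hT : s * |u j₀| ≤ ∑ i ∈ T, |u i| := by
      simpa [hTcard] using card_nsmul_le_sum T _ _ fun i hi => htop i hi j₀ hj₀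
    rw [← sq_le_sq₀ (mul_nonneg (by positivity) (norm2_nonneg _)) (by positivity), mul_pow,
      Real.sq_sqrt (by positivity)]
    calc s * norm2 (restr T' u) ^ 2 ≤ s * (s * |u j₀| ^ 2) := by
          gcongr
          exact hT'.trans (by gcongr)
      _ = (s * |u j₀|) ^ 2 := by ring
      _ ≤ (∑ i ∈ T, |u i|) ^ 2 := by gcongr
  refine ⟨T, hTF, hTcard.le, restr T' u :: L, ?_, ?_, ?_⟩
  · simp only [List.forall_mem_cons]
    exact ⟨⟨(spt_restr_subset T' u).trans hT'F,
        (card_le_card (spt_restr_subset T' u)).trans hT'card⟩,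
      fun r hr => ⟨(hL r hr).1.trans sdiff_subset, (hL r hr).2⟩⟩
  · rw [List.sum_cons, ← hdecomp, ← restr_union disjoint_sdiff, union_sdiff_of_subset hTF]
  · rw [List.map_cons, List.sum_cons, mul_add, ← sum_sdiff hTF]
    linarith

lemma exists_cone_decomposition (u : Fin k → ℝ) (T₀ : Finset (Fin k)) (s : ℕ) {c : ℝ}
    (hc : 0 ≤ c) (hcone : ∑ i ∈ T₀ᶜ, |u i| ≤ √s * c) :
    ∃ T₁, Disjoint T₀ T₁ ∧ T₁.card ≤ s ∧ ∃ L : List (Fin k → ℝ),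
      (∀ r ∈ L, Disjoint (T₀ ∪ T₁) (spt r) ∧ (spt r).card ≤ s) ∧
      u = restr (T₀ ∪ T₁) u + L.sum ∧ (L.map norm2).sum ≤ c := by
  rcases s.eq_zero_or_pos with rfl | hs
  · have hu : restr T₀ᶜ u = 0 := by
      rw [Nat.cast_zero, Real.sqrt_zero, zero_mul] at hcone
      have hzero := (sum_eq_zero_iff_of_nonneg fun i _ => abs_nonneg (u i)).mp
        (hcone.antisymm (sum_nonneg fun i _ => abs_nonneg _))
      ext i
      simp only [restr, Pi.zero_apply]
      split_ifs with hi
      · exact abs_eq_zero.mp (hzero i hi)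
      · rfl
    refine ⟨∅, disjoint_empty_right _, le_rfl, [], by simp, ?_, by simpa⟩
    rw [union_empty, List.sum_nil, add_zero]
    nth_rewrite 1 [← restr_add_restr_compl T₀ u]
    rw [hu, add_zero]
  · obtain ⟨T₁, hT₁, hcard, L, hL, hdecomp, hbound⟩ :=
      exists_sparse_decomposition hs u T₀ᶜ
    have hdisj : Disjoint T₀ T₁ := disjoint_of_subset_right hT₁ disjoint_compl_right
    refine ⟨T₁, hdisj, hcard, L, fun r hr => ⟨?_, (hL r hr).2⟩, ?_, ?_⟩
    · exact disjoint_of_subset_right (hL r hr).1 (disjoint_union_left.mpr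
        ⟨disjoint_of_subset_right sdiff_subset disjoint_compl_right, disjoint_sdiff⟩)
    · rw [restr_union hdisj, add_assoc, ← hdecomp, restr_add_restr_compl]
    · exact le_of_mul_le_mul_left (hbound.trans hcone) (by positivity)

end Decomposition

section ModifiedCS

lemma sum_abs_sub_compl_le {k : ℕ} {x xhat : Fin k → ℝ} {T : Finset (Fin k)}
    (hmin : ∑ i ∈ Tᶜ, |xhat i| ≤ ∑ i ∈ Tᶜ, |x i|) :
    ∑ i ∈ (T ∪ spt x)ᶜ, |(x - xhat) i| ≤ ∑ i ∈ spt x \ T, |(x - xhat) i| := by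
  have hsplit : Tᶜ = (spt x \ T) ∪ (T ∪ spt x)ᶜ := by
    ext i
    simp only [mem_compl, mem_union, mem_sdiff]
    tauto
  have hdisj : Disjoint (spt x \ T) (T ∪ spt x)ᶜ :=
    disjoint_of_subset_left (sdiff_subset.trans subset_union_right) disjoint_compl_right
  have hx0 : ∀ i ∈ (T ∪ spt x)ᶜ, x i = 0 := fun i hi => by
    simpa [spt] using (mem_compl.mp hi) ∘ mem_union_right T
  have hFx : ∑ i ∈ (T ∪ spt x)ᶜ, |x i| = 0 := sum_eq_zero fun i hi => by simp [hx0 i hi]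
  have hF : ∑ i ∈ (T ∪ spt x)ᶜ, |(x - xhat) i| = ∑ i ∈ (T ∪ spt x)ᶜ, |xhat i| :=
    sum_congr rfl fun i hi => by simp [hx0 i hi]
  have hΔ : ∑ i ∈ spt x \ T, (|x i| - |xhat i|) ≤ ∑ i ∈ spt x \ T, |(x - xhat) i| :=
    sum_le_sum fun i _ => abs_sub_abs_le_abs_sub _ _
  rw [hsplit, sum_union hdisj, sum_union hdisj] at hmin
  rw [sum_sub_distrib] at hΔ
  linarith

lemma norm2_mulVec_sub_le {n m : ℕ} {A : Matrix (Fin n) (Fin m) ℝ} {y : Fin n → ℝ}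
    {a b : Fin m → ℝ} {ε : ℝ} (ha : norm2 (y - A *ᵥ a) ≤ ε)
    (hb : norm2 (y - A *ᵥ b) ≤ ε) :
    norm2 (A *ᵥ (a - b)) ≤ 2 * ε := by
  have hAab : A *ᵥ (a - b) = (y - A *ᵥ b) - (y - A *ᵥ a) := by
    rw [mulVec_sub]
    abel
  rw [hAab]
  linarith [norm2_sub_le (y - A *ᵥ b) (y - A *ᵥ a)]

lemma half_le_one_sub_mul {δ : ℝ} (hδ : δ ≤ (√2 - 1) / 2) :
    1 / 2 ≤ 1 - (√2 + 1) * δ := by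
  nlinarith [mul_le_mul_of_nonneg_left hδ (by positivity : (0 : ℝ) ≤ √2 + 1),
    Real.sq_sqrt (zero_le_two : (0 : ℝ) ≤ 2)]

lemma C1_le {δ : ℝ} (hδ : δ ≤ (√2 - 1) / 2) : C1 δ ≤ 8.79 := by
  have hd := half_le_one_sub_mul hδ
  have hsqrt2 : √2 ≤ 1.41422 := Real.sqrt_le_iff.mpr ⟨by norm_num, by norm_num⟩
  have hsqrt : √(1 + δ) ≤ 1.0987 := Real.sqrt_le_iff.mpr ⟨by norm_num, by linarith⟩
  rw [C1, div_le_iff₀ (by linarith)]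
  nlinarith [Real.sqrt_nonneg (1 + δ)]

end ModifiedCS

/-- modified-CS error bound with `δ < (√2-1)/2` (Corollary 1). -/
theorem modCS_error_bound' {n m : ℕ} (A : Matrix (Fin n) (Fin m) ℝ)
    (x : Fin m → ℝ) (w : Fin n → ℝ) (ε δ : ℝ) (T : Finset (Fin m))
    (hw : norm2 w ≤ ε)
    (hδ : δ < (Real.sqrt 2 - 1) / 2)
    (hRIP : RIPBound A ((spt x).card + ((spt x) \ T).card + (T \ (spt x)).card) δ)
    (xhat : Fin m → ℝ)
    (hxhat : ModCS A (fun j => (A.mulVec x) j + w j) ε T xhat) :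
    norm2 (fun i => x i - xhat i) ≤ C1 δ * ε ∧ C1 δ * ε ≤ 8.79 * ε := by
  have hε : 0 ≤ ε := (norm2_nonneg w).trans hw
  refine ⟨?_, mul_le_mul_of_nonneg_right (C1_le hδ.le) hε⟩
  obtain ⟨hxhat_feas, hxhat_min⟩ := hxhat
  have hx_feas : norm2 ((A *ᵥ x + w) - A *ᵥ x) ≤ ε := by simpa using hw
  set N := spt x
  set Δ := N \ T
  have hcone : ∑ i ∈ (T ∪ N)ᶜ, |(x - xhat) i| ≤ √Δ.card * norm2 (restr Δ (x - xhat)) :=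
    (sum_abs_sub_compl_le (hxhat_min x hx_feas)).trans
      (sum_abs_le_sqrt_card_mul_norm2_restr _ _)
  obtain ⟨T₁, hdisj, hT₁, L, hL, hdecomp, hη⟩ :=
    exists_cone_decomposition (x - xhat) (T ∪ N) Δ.card (norm2_nonneg _) hcone
  have hΔN : Δ.card ≤ N.card := card_le_card sdiff_subset
  have hTN := card_sdiff_add_card T N
  have hΔ : Δ ⊆ T ∪ N ∪ T₁ := sdiff_subset.trans (subset_union_right.trans subset_union_left)
  exact hRIP.norm2_le_C1_mul (by linarith [half_le_one_sub_mul hδ.le]) hdisj (by omega) hT₁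
    (by omega) hL hdecomp (hη.trans (norm2_restr_mono hΔ _))
    (norm2_mulVec_sub_le hx_feas hxhat_feas)
end

section
/- Let x ∈ ℝ^m have support N := {i : x_i ≠ 0}, let T ⊆ {1,…,m} and Δ := N \ T, and let y = A x + w ∈ ℝ^n with ‖w‖₂ ≤ ε. Suppose some δ < 1/2 is a |T|-restricted isometry bound for A (in particular A_T has full column rank) and θ is a (|T|,|Δ|)-restricted orthogonality bound for A. Then the LS estimate x̂ on T from y satisfies ‖(x − x̂)_T‖₂ ≤ √2·ε + 2θ·‖x_Δ‖₂, where (v)_T denotes the restriction of v to the coordinates indexed by T and x_Δ the restriction of x to Δ. -/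
open Finset

attribute [local instance] Classical.propDecidable

/-- LS estimation error bound on the known part of the support. -/
theorem ls_error_bound {n m : ℕ} (A : Matrix (Fin n) (Fin m) ℝ)
    (x : Fin m → ℝ) (w : Fin n → ℝ) (ε δ θ : ℝ) (T : Finset (Fin m))
    (hw : norm2 w ≤ ε)
    (hδ : δ < 1 / 2)
    (hRIP : RIPBound A T.card δ)
    (hθ : ROBound A T.card ((spt x \ T).card) θ)
    (xhat : Fin m → ℝ)
    (hLS : IsLS A (fun j => (A.mulVec x) j + w j) T xhat) :
    norm2 (restr T (fun i => x i - xhat i)) ≤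
      Real.sqrt 2 * ε + 2 * θ * norm2 (restr (spt x \ T) x) := by
  classical
  obtain ⟨hδ0, hδ1, hrip⟩ := hRIP
  obtain ⟨hθ0, hro⟩ := hθ
  obtain ⟨hsupp, hne⟩ := hLS
  set u : Fin m → ℝ := restr T (fun i => x i - xhat i) with hu
  set v : Fin m → ℝ := restr (spt x \ T) x with hv
  have hε0 : 0 ≤ ε := le_trans (Real.sqrt_nonneg _) hw
  have hdecomp : ∀ i, x i - xhat i = u i + v i := by
    intro i
    by_cases hiT : i ∈ T
    · have hv0 : v i = 0 := by simp [hv, restr, hiT]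
      simp [hu, restr, hiT, hv0]
    · have hx0 : xhat i = 0 := hsupp i hiT
      by_cases hix : x i = 0
      · simp [hu, hv, restr, spt, hiT, hx0, hix]
      · simp [hu, hv, restr, spt, hiT, hx0, hix]
  -- supports
  have hsu : spt u ⊆ T := by
    intro i hi
    simp only [spt, Finset.mem_filter] at hi
    by_contra h
    exact hi.2 (by simp [hu, restr, h])
  have hsv : spt v ⊆ spt x \ T := by
    intro i hi
    simp only [spt, Finset.mem_filter] at hi
    by_contra h
    exact hi.2 (by simp [hv, restr, h])
  have hdisj : Disjoint (spt u) (spt v) :=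
    Finset.disjoint_sdiff.mono hsu hsv
  have hcardu : (spt u).card ≤ T.card := Finset.card_le_card hsu
  have hcardv : (spt v).card ≤ (spt x \ T).card := Finset.card_le_card hsv
  -- residual
  set r : Fin n → ℝ := fun j => A.mulVec u j + A.mulVec v j + w j with hr
  have hres : ∀ j, (A.mulVec x j + w j) - A.mulVec xhat j = r j := by
    intro j
    have h1 : (∑ i, A j i * u i) + (∑ i, A j i * v i)
        = (∑ i, A j i * x i) - (∑ i, A j i * xhat i) := by
      rw [← Finset.sum_add_distrib, ← Finset.sum_sub_distrib]
      refine Finset.sum_congr rfl fun i _ => ?_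
      rw [← mul_add, ← mul_sub, ← hdecomp i]
    simp only [hr, Matrix.mulVec, dotProduct]
    linarith [h1]
  -- orthogonality from the normal equations
  have hkey : (∑ j, A.mulVec u j * r j) = 0 := by
    have hswap : (∑ j, A.mulVec u j * r j) = ∑ i, u i * (∑ j, A j i * r j) := by
      simp only [Matrix.mulVec, dotProduct, Finset.sum_mul, Finset.mul_sum]
      rw [Finset.sum_comm]
      exact Finset.sum_congr rfl fun i _ => Finset.sum_congr rfl fun j _ => by ring
    rw [hswap]
    refine Finset.sum_eq_zero fun i _ => ?_
    by_cases hiT : i ∈ T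
    · have h0 := hne i hiT
      have h0' : (∑ j, A j i * r j) = 0 := by
        rw [← h0]
        refine Finset.sum_congr rfl fun j _ => ?_
        show A j i * r j = A j i * ((A.mulVec x j + w j) - A.mulVec xhat j)
        rw [hres j]
      rw [h0', mul_zero]
    · have hu0 : u i = 0 := by simp [hu, restr, hiT]
      rw [hu0, zero_mul]
  -- split the sum
  have hsplit : (∑ j, A.mulVec u j ^ 2) + (∑ j, A.mulVec u j * A.mulVec v j)
      + (∑ j, A.mulVec u j * w j) = 0 := by
    rw [← Finset.sum_add_distrib, ← Finset.sum_add_distrib, ← hkey]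
    refine Finset.sum_congr rfl fun j _ => ?_
    simp only [hr]; ring
  set Suu := ∑ j, A.mulVec u j ^ 2 with hSuu
  set Suv := ∑ j, A.mulVec u j * A.mulVec v j with hSuv
  set Suw := ∑ j, A.mulVec u j * w j with hSuw
  have hSuu0 : 0 ≤ Suu := Finset.sum_nonneg fun j _ => sq_nonneg _
  set a := Real.sqrt Suu with ha
  have ha0 : 0 ≤ a := Real.sqrt_nonneg _
  have ha2 : a ^ 2 = Suu := Real.sq_sqrt hSuu0
  have hU0 : 0 ≤ norm2 u := Real.sqrt_nonneg _
  have hV0 : 0 ≤ norm2 v := Real.sqrt_nonneg _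
  have hUsq : norm2 u ^ 2 = ∑ i, u i ^ 2 := by
    simp only [norm2]
    exact Real.sq_sqrt (Finset.sum_nonneg fun i _ => sq_nonneg _)
  -- RIP lower bound
  have hrip1 : (1 - δ) * (∑ i, u i ^ 2) ≤ Suu := (hrip u hcardu).1
  have hUa : (1 - δ) * norm2 u ^ 2 ≤ a ^ 2 := by rw [hUsq, ha2]; exact hrip1
  -- RO bound
  have habsSuv : |Suv| ≤ θ * norm2 u * norm2 v := hro u v hdisj hcardu hcardv
  -- Cauchy–Schwarz for the noise term
  have hCSa : Real.sqrt (∑ j, A.mulVec u j ^ 2) = a := by rw [ha, hSuu]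
  have hCS1 : Suw ≤ a * ε := by
    have h := Real.sum_mul_le_sqrt_mul_sqrt Finset.univ (A.mulVec u) w
    rw [hCSa] at h
    have hwn : Real.sqrt (∑ j, w j ^ 2) ≤ ε := hw
    calc Suw ≤ a * Real.sqrt (∑ j, w j ^ 2) := h
      _ ≤ a * ε := mul_le_mul_of_nonneg_left hwn ha0
  have hCS2 : -Suw ≤ a * ε := by
    have h := Real.sum_mul_le_sqrt_mul_sqrt Finset.univ (A.mulVec u) (fun j => -w j)
    simp only [neg_sq, mul_neg, Finset.sum_neg_distrib] at h
    rw [hCSa] at h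
    have hwn : Real.sqrt (∑ j, w j ^ 2) ≤ ε := hw
    calc -Suw ≤ a * Real.sqrt (∑ j, w j ^ 2) := h
      _ ≤ a * ε := mul_le_mul_of_nonneg_left hwn ha0
  have habsSuw : |Suw| ≤ a * ε := abs_le.mpr ⟨by linarith, hCS1⟩
  -- key quadratic inequality
  have hquad : a ^ 2 ≤ θ * norm2 u * norm2 v + a * ε := by
    rw [ha2]
    have h1 := neg_abs_le Suv
    have h2 := neg_abs_le Suw
    linarith
  -- the scaling factor
  set s := Real.sqrt (1 - δ) with hs
  have hδlt : (0:ℝ) < 1 - δ := by linarith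
  have hs0 : 0 < s := Real.sqrt_pos.mpr hδlt
  have hs2 : s ^ 2 = 1 - δ := Real.sq_sqrt hδlt.le
  have h1 : s * norm2 u ≤ a := by
    have hsq : (s * norm2 u) ^ 2 ≤ a ^ 2 := by
      rw [mul_pow, hs2]; exact hUa
    have := Real.sqrt_le_sqrt hsq
    rwa [Real.sqrt_sq (by positivity), Real.sqrt_sq ha0] at this
  rcases eq_or_lt_of_le ha0 with haz | hap
  · -- a = 0 case
    have hU00 : norm2 u = 0 := by
      have haz' : a = 0 := haz.symm
      have hsq : norm2 u ^ 2 ≤ 0 := by nlinarith only [hUa, hδlt, haz']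
      nlinarith only [hU0, hsq]
    rw [hU00]
    have p1 : 0 ≤ Real.sqrt 2 * ε := mul_nonneg (Real.sqrt_nonneg _) hε0
    have p2 : 0 ≤ 2 * θ * norm2 v := by positivity
    linarith
  · -- a > 0 case
    have h2 : s * a ≤ θ * norm2 v + s * ε := by
      have F1 : s * a ^ 2 ≤ s * (θ * norm2 u * norm2 v + a * ε) :=
        mul_le_mul_of_nonneg_left hquad hs0.le
      have F2 : (s * norm2 u) * (θ * norm2 v) ≤ a * (θ * norm2 v) :=
        mul_le_mul_of_nonneg_right h1 (mul_nonneg hθ0 hV0)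
      have step : a * (s * a) ≤ a * (θ * norm2 v + s * ε) := by
        nlinarith only [F1, F2]
      exact le_of_mul_le_mul_left step hap
    have hU1 : (1 - δ) * norm2 u ≤ θ * norm2 v + s * ε := by
      have G1 : s * (s * norm2 u) ≤ s * a := mul_le_mul_of_nonneg_left h1 hs0.le
      have heq : (1 - δ) * norm2 u = s * (s * norm2 u) := by rw [← hs2]; ring
      rw [heq]
      exact le_trans G1 h2
    have hsge : 1 ≤ Real.sqrt 2 * s := by
      have hle : (1:ℝ) ≤ 2 * (1 - δ) := by linarith
      calc (1:ℝ) = Real.sqrt 1 := by simp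
        _ ≤ Real.sqrt (2 * (1 - δ)) := Real.sqrt_le_sqrt hle
        _ = Real.sqrt 2 * s := Real.sqrt_mul (by norm_num) _
    have e1 : 0 ≤ ε * (Real.sqrt 2 * s ^ 2 - s) := by
      have h' : 0 ≤ Real.sqrt 2 * s - 1 := by linarith
      have h'' := mul_nonneg hε0 (mul_nonneg hs0.le h')
      calc (0:ℝ) ≤ ε * (s * (Real.sqrt 2 * s - 1)) := h''
        _ = ε * (Real.sqrt 2 * s ^ 2 - s) := by ring
    have e2 : 0 ≤ (2 * s ^ 2 - 1) * (θ * norm2 v) := by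
      have hge : 1 ≤ 2 * s ^ 2 := by rw [hs2]; linarith
      exact mul_nonneg (by linarith) (mul_nonneg hθ0 hV0)
    have hfin2 : θ * norm2 v + s * ε
        ≤ s ^ 2 * (Real.sqrt 2 * ε + 2 * θ * norm2 v) := by
      nlinarith only [e1, e2]
    have hfinal : (1 - δ) * norm2 u
        ≤ (1 - δ) * (Real.sqrt 2 * ε + 2 * θ * norm2 v) := by
      rw [← hs2]
      calc s ^ 2 * norm2 u ≤ θ * norm2 v + s * ε := by rw [hs2]; exact hU1
        _ ≤ s ^ 2 * (Real.sqrt 2 * ε + 2 * θ * norm2 v) := hfin2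
    exact le_of_mul_le_mul_left hfinal hδlt
end

section
/- Let x ∈ ℝ^m have support N := {i : x_i ≠ 0}, let T_det ⊆ {1,…,m}, Δ_det := N \ T_det, and y = A x + w with ‖w‖₂ ≤ ε. Assume |T_det| ≤ S_T, |Δ_det| ≤ S_Δ, some δ < 1/2 is an S_T-restricted isometry bound for A, and θ is an (S_T, S_Δ)-restricted orthogonality bound for A. Let x̂_det be the LS estimate on T_det from y, let S_a ≥ 1, and assume the LS step error is spread out: ‖(x − x̂_det)_{T_det}‖_∞ ≤ ‖(x − x̂_det)_{T_det}‖₂ / √S_a. If b₁ > α_del + (√2·ε + 2θ·‖x_{Δ_det}‖₂)/√S_a, then every i ∈ T_det with |x_i| ≥ b₁ satisfies |x̂_{det,i}| > α_del, i.e., no such element is falsely deleted by the threshold-α_del deletion step. -/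
open Finset

attribute [local instance] Classical.propDecidable

set_option maxHeartbeats 1600000 in
/-- no-false-deletion condition under the spread-out LS error assumption
(Lemma 6). -/
theorem no_false_deletion_spread {n m : ℕ} (A : Matrix (Fin n) (Fin m) ℝ)
    (x : Fin m → ℝ) (w : Fin n → ℝ) (ε δ θ αdel b1 : ℝ) (Tdet : Finset (Fin m))
    (ST SΔ Sa : ℕ)
    (hw : norm2 w ≤ ε)
    (hT : Tdet.card ≤ ST)
    (hΔ : (spt x \ Tdet).card ≤ SΔ)
    (hδ : δ < 1 / 2)
    (hRIP : RIPBound A ST δ)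
    (hθ : ROBound A ST SΔ θ)
    (xdet : Fin m → ℝ)
    (hLS : IsLS A (fun j => (A.mulVec x) j + w j) Tdet xdet)
    (hSa : 1 ≤ Sa)
    (hspread : normInf (restr Tdet (fun i => x i - xdet i)) ≤
      norm2 (restr Tdet (fun i => x i - xdet i)) / Real.sqrt (Sa : ℝ))
    (hb1 : b1 > αdel +
      (Real.sqrt 2 * ε + 2 * θ * norm2 (restr (spt x \ Tdet) x)) / Real.sqrt (Sa : ℝ)) :
    ∀ i ∈ Tdet, b1 ≤ |x i| → αdel < |xdet i| := by
    classical
  obtain ⟨hδ0, hδ1, hRIPf⟩ := hRIP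
  obtain ⟨hθ0, hROf⟩ := hθ
  set z : Fin m → ℝ := restr Tdet (fun i => x i - xdet i) with hzdef
  set u : Fin m → ℝ := restr (spt x \ Tdet) x with hudef
  set X : ℝ := norm2 u with hXdef
  set t : ℝ := norm2 z with htdef
  have hε0 : 0 ≤ ε := le_trans (Real.sqrt_nonneg _) hw
  have ht0 : 0 ≤ t := Real.sqrt_nonneg _
  have hX0 : 0 ≤ X := Real.sqrt_nonneg _
  have hθX0 : 0 ≤ θ * X := mul_nonneg hθ0 hX0
  have h2 : (Real.sqrt 2) ^ 2 = 2 := Real.sq_sqrt (by norm_num)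
  have h20 : (0:ℝ) ≤ Real.sqrt 2 := Real.sqrt_nonneg 2
  -- supports
  have hsptz : spt z ⊆ Tdet := by
    intro i hi
    simp only [spt, Finset.mem_filter] at hi
    by_contra h
    exact hi.2 (by simp [hzdef, restr, h])
  have hsptu : spt u ⊆ spt x \ Tdet := by
    intro i hi
    simp only [spt, Finset.mem_filter] at hi
    by_contra h
    exact hi.2 (by simp [hudef, restr, h])
  have hcz : (spt z).card ≤ ST := le_trans (Finset.card_le_card hsptz) hT
  have hcu : (spt u).card ≤ SΔ := le_trans (Finset.card_le_card hsptu) hΔ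
  have hdisj : Disjoint (spt z) (spt u) := by
    rw [Finset.disjoint_left]
    intro i hiz hiu
    exact (Finset.mem_sdiff.mp (hsptu hiu)).2 (hsptz hiz)
  -- decomposition
  have hdecomp : ∀ i, x i - xdet i = z i + u i := by
    intro i
    by_cases hiT : i ∈ Tdet
    · have hnot : i ∉ spt x \ Tdet := by simp [hiT]
      simp [hzdef, hudef, restr, hiT, hnot]
    · have hx0 : xdet i = 0 := hLS.1 i hiT
      by_cases hix : x i = 0
      · simp [hzdef, hudef, restr, hiT, hx0, hix]
      · have hmem : i ∈ spt x \ Tdet := by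
          simp [spt, hix, hiT]
        simp [hzdef, hudef, restr, hiT, hx0, hmem]
  have hr : ∀ j, (A.mulVec x) j - (A.mulVec xdet) j = (A.mulVec z) j + (A.mulVec u) j := by
    intro j
    simp only [Matrix.mulVec, dotProduct]
    rw [← Finset.sum_sub_distrib, ← Finset.sum_add_distrib]
    apply Finset.sum_congr rfl
    intro i _
    rw [← mul_sub, ← mul_add, hdecomp i]
  -- orthogonality from normal equations
  have hswap : ∀ r : Fin n → ℝ, ∑ j, (A.mulVec z) j * r j = ∑ i, z i * ∑ j, A j i * r j := by
    intro r
    simp only [Matrix.mulVec, dotProduct, Finset.sum_mul, Finset.mul_sum]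
    rw [Finset.sum_comm]
    apply Finset.sum_congr rfl
    intro i _
    apply Finset.sum_congr rfl
    intro j _
    ring
  have hzero : ∑ j, (A.mulVec z) j * ((A.mulVec x) j + w j - (A.mulVec xdet) j) = 0 := by
    rw [hswap]
    apply Finset.sum_eq_zero
    intro i _
    by_cases hiT : i ∈ Tdet
    · have := hLS.2 i hiT
      simp only [] at this
      rw [this, mul_zero]
    · have hzi : z i = 0 := by simp [hzdef, restr, hiT]
      rw [hzi, zero_mul]
  set A2 : ℝ := ∑ j, (A.mulVec z) j ^ 2 with hA2def
  set P : ℝ := ∑ j, (A.mulVec z) j * (A.mulVec u) j with hPdef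
  set Q : ℝ := ∑ j, (A.mulVec z) j * w j with hQdef
  have hA20 : 0 ≤ A2 := Finset.sum_nonneg fun j _ => sq_nonneg _
  set a : ℝ := Real.sqrt A2 with hadef
  have ha0 : 0 ≤ a := Real.sqrt_nonneg _
  have ha2 : a ^ 2 = A2 := Real.sq_sqrt hA20
  have hPQ : A2 + P + Q = 0 := by
    rw [← hzero]
    rw [hA2def, hPdef, hQdef, ← Finset.sum_add_distrib, ← Finset.sum_add_distrib]
    apply Finset.sum_congr rfl
    intro j _
    have hj : (A.mulVec x) j + w j - (A.mulVec xdet) j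
        = (A.mulVec z) j + (A.mulVec u) j + w j := by linarith [hr j]
    rw [hj]; ring
  have hP : |P| ≤ θ * t * X := hROf z u hdisj hcz hcu
  have hQb : |Q| ≤ a * ε := by
    have hcs := Finset.sum_mul_sq_le_sq_mul_sq Finset.univ (fun j => (A.mulVec z) j) w
    have hW0 : 0 ≤ ∑ j, w j ^ 2 := Finset.sum_nonneg fun j _ => sq_nonneg _
    have h1 : |Q| ≤ Real.sqrt (A2 * ∑ j, w j ^ 2) := by
      rw [← Real.sqrt_sq_eq_abs]
      exact Real.sqrt_le_sqrt hcs
    have h2' : Real.sqrt (A2 * ∑ j, w j ^ 2) = a * norm2 w := by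
      rw [Real.sqrt_mul hA20]; rfl
    calc |Q| ≤ a * norm2 w := by rw [← h2']; exact h1
      _ ≤ a * ε := mul_le_mul_of_nonneg_left hw ha0
  -- RIP lower bound
  have ht2 : t ^ 2 = ∑ i, z i ^ 2 := Real.sq_sqrt (Finset.sum_nonneg fun i _ => sq_nonneg _)
  have hRIPlow : (1 - δ) * t ^ 2 ≤ a ^ 2 := by
    rw [ht2, ha2]; exact (hRIPf z hcz).1
  have hta : t ≤ Real.sqrt 2 * a := by
    have htleq : t ^ 2 ≤ 2 * a ^ 2 := by nlinarith [sq_nonneg t]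
    nlinarith [sq_nonneg (t - Real.sqrt 2 * a), mul_nonneg h20 ha0]
  have hkey2 : a ^ 2 ≤ θ * t * X + a * ε := by
    have h1 : A2 = -P - Q := by linarith
    have h2'' : A2 ≤ |P| + |Q| := by
      rw [h1]
      linarith [neg_abs_le P, neg_abs_le Q]
    rw [ha2]; linarith
  -- main bound on t
  have htfinal : t ≤ Real.sqrt 2 * ε + 2 * θ * X := by
    by_cases hae : a ≤ ε
    · calc t ≤ Real.sqrt 2 * a := hta
        _ ≤ Real.sqrt 2 * ε := mul_le_mul_of_nonneg_left hae h20
        _ ≤ Real.sqrt 2 * ε + 2 * θ * X := by linarith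
    · push_neg at hae
      have hapos : 0 < a := lt_of_le_of_lt hε0 hae
      have hstep : a * (a - ε) ≤ θ * X * (Real.sqrt 2 * a) := by
        have h3 : θ * t * X ≤ θ * X * (Real.sqrt 2 * a) := by
          have := mul_le_mul_of_nonneg_left hta hθX0
          nlinarith [this]
        nlinarith [hkey2]
      have ha_le : a ≤ ε + Real.sqrt 2 * (θ * X) := by nlinarith [hstep, hapos]
      calc t ≤ Real.sqrt 2 * a := hta
        _ ≤ Real.sqrt 2 * (ε + Real.sqrt 2 * (θ * X)) :=
            mul_le_mul_of_nonneg_left ha_le h20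
        _ = Real.sqrt 2 * ε + (Real.sqrt 2 * Real.sqrt 2) * (θ * X) := by ring
        _ = Real.sqrt 2 * ε + 2 * θ * X := by
            rw [Real.mul_self_sqrt (by norm_num : (0:ℝ) ≤ 2)]; ring
  -- conclusion
  intro i hiT hbi
  have hSapos : (0:ℝ) < Real.sqrt (Sa : ℝ) := by
    apply Real.sqrt_pos.mpr
    exact_mod_cast Nat.lt_of_lt_of_le Nat.zero_lt_one hSa
  have hzi : z i = x i - xdet i := by simp [hzdef, restr, hiT]
  have hzle : |z i| ≤ normInf z := by
    have : |z i| ≤ ⨆ j, |z j| :=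
      le_ciSup (f := fun j => |z j|) (Set.Finite.bddAbove (Set.finite_range _)) i
    simpa [normInf] using this
  have hchain : |x i - xdet i| ≤ (Real.sqrt 2 * ε + 2 * θ * X) / Real.sqrt (Sa : ℝ) := by
    rw [← hzi]
    calc |z i| ≤ normInf z := hzle
      _ ≤ t / Real.sqrt (Sa : ℝ) := hspread
      _ ≤ (Real.sqrt 2 * ε + 2 * θ * X) / Real.sqrt (Sa : ℝ) := by
          gcongr
  have htri : |x i| - |xdet i| ≤ |x i - xdet i| := abs_sub_abs_le_abs_sub _ _
  linarith [hb1, hbi, hchain, htri]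
end

section
/- Let x ∈ ℝ^m have support N := {i : x_i ≠ 0}, let T_det ⊆ {1,…,m}, Δ_det := N \ T_det, and y = A x + w with ‖w‖₂ ≤ ε. Assume |T_det| ≤ S_T, |Δ_det| ≤ S_Δ, some δ < 1/2 is an S_T-restricted isometry bound for A, and θ is an (S_T, S_Δ)-restricted orthogonality bound for A. Let x̂_det be the LS estimate on T_det from y, let S_a ≥ 1, and assume the LS step error is spread out: ‖(x − x̂_det)_{T_det}‖_∞ ≤ ‖(x − x̂_det)_{T_det}‖₂ / √S_a. If α_del ≥ (√2·ε + 2θ·‖x_{Δ_det}‖₂)/√S_a, then |x̂_{det,i}| ≤ α_del for every i ∈ T_det with x_i = 0, i.e., every extra element of T_det is deleted by the threshold-α_del deletion step. -/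
open Finset

attribute [local instance] Classical.propDecidable

set_option maxHeartbeats 1000000

private lemma key_ineq (s c b θ e εr : ℝ) (hs : 0 < s) (hc : 0 ≤ c) (hb : 0 ≤ b)
    (hθ : 0 ≤ θ) (he : 0 ≤ e) (hε : 0 ≤ εr)
    (h1 : s * c ≤ b) (h2 : b ^ 2 ≤ θ * c * e + b * εr) :
    s ^ 2 * c ≤ s * εr + θ * e := by
  rcases le_or_gt (s * c) εr with h | h
  · nlinarith [mul_nonneg hθ he]
  · rcases eq_or_lt_of_le hc with hc0 | hc'
    · nlinarith [mul_nonneg hθ he, mul_nonneg hs.le hε]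
    · have hb1 : b * (s * c) ≤ b ^ 2 := by nlinarith
      have hb2 : b * (s * c - εr) ≤ θ * c * e := by nlinarith
      have hb3 : (s * c) * (s * c - εr) ≤ θ * c * e := by nlinarith
      nlinarith

/-- deletion condition under the spread-out LS error assumption (Lemma 7). -/
theorem deletion_condition_spread {n m : ℕ} (A : Matrix (Fin n) (Fin m) ℝ)
    (x : Fin m → ℝ) (w : Fin n → ℝ) (ε δ θ αdel : ℝ) (Tdet : Finset (Fin m))
    (ST SΔ Sa : ℕ)
    (hw : norm2 w ≤ ε)
    (hT : Tdet.card ≤ ST)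
    (hΔ : (spt x \ Tdet).card ≤ SΔ)
    (hδ : δ < 1 / 2)
    (hRIP : RIPBound A ST δ)
    (hθ : ROBound A ST SΔ θ)
    (xdet : Fin m → ℝ)
    (hLS : IsLS A (fun j => (A.mulVec x) j + w j) Tdet xdet)
    (hSa : 1 ≤ Sa)
    (hspread : normInf (restr Tdet (fun i => x i - xdet i)) ≤
      norm2 (restr Tdet (fun i => x i - xdet i)) / Real.sqrt (Sa : ℝ))
    (hαdel : αdel ≥
      (Real.sqrt 2 * ε + 2 * θ * norm2 (restr (spt x \ Tdet) x)) / Real.sqrt (Sa : ℝ)) :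
    ∀ i ∈ Tdet, x i = 0 → |xdet i| ≤ αdel := by
  classical
  set y : Fin n → ℝ := fun j => (A.mulVec x) j + w j with hy
  set d : Fin m → ℝ := restr Tdet (fun i => x i - xdet i) with hd
  set Δ : Finset (Fin m) := spt x \ Tdet with hΔdef
  set xΔ : Fin m → ℝ := restr Δ x with hxΔ
  obtain ⟨hLS0, hLSne⟩ := hLS
  have hε : 0 ≤ ε := le_trans (Real.sqrt_nonneg _) hw
  have hθ0 : 0 ≤ θ := hθ.1
  have hδ0 : 0 ≤ δ := hRIP.1
  -- decomposition x - xdet = d + xΔ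
  have hdecomp : ∀ k, x k - xdet k = d k + xΔ k := by
    intro k
    by_cases hk : k ∈ Tdet
    · have hk2 : k ∉ Δ := by simp [hΔdef, hk]
      simp [hd, hxΔ, restr, hk, hk2]
    · have hx0 : xdet k = 0 := hLS0 k hk
      by_cases hks : k ∈ spt x
      · simp [hd, hxΔ, restr, hk, hΔdef, hks, hx0]
      · have hxk : x k = 0 := by simpa [spt] using hks
        simp [hd, hxΔ, restr, hk, hΔdef, hks, hx0, hxk]
  -- residual decomposition
  have hr : ∀ j, y j - (A.mulVec xdet) j
      = (A.mulVec d) j + (A.mulVec xΔ) j + w j := by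
    intro j
    have hmv : (A.mulVec x) j - (A.mulVec xdet) j
        = (A.mulVec d) j + (A.mulVec xΔ) j := by
      simp only [Matrix.mulVec, dotProduct]
      rw [← Finset.sum_sub_distrib, ← Finset.sum_add_distrib]
      refine Finset.sum_congr rfl fun k _ => ?_
      rw [← mul_sub, ← mul_add, hdecomp k]
    have : y j = (A.mulVec x) j + w j := rfl
    rw [this]; linarith
  -- summed normal equations
  have hNE : ∑ j, (A.mulVec d) j * (y j - (A.mulVec xdet) j) = 0 := by
    have hswap : ∑ j, (A.mulVec d) j * (y j - (A.mulVec xdet) j)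
        = ∑ k, d k * ∑ j, A j k * (y j - (A.mulVec xdet) j) := by
      simp only [Matrix.mulVec, dotProduct, Finset.sum_mul, Finset.mul_sum]
      rw [Finset.sum_comm]
      refine Finset.sum_congr rfl fun k _ => Finset.sum_congr rfl fun j _ => by ring
    rw [hswap]
    refine Finset.sum_eq_zero fun k _ => ?_
    by_cases hk : k ∈ Tdet
    · rw [hLSne k hk, mul_zero]
    · have : d k = 0 := by simp [hd, restr, hk]
      rw [this, zero_mul]
  -- supports
  have hsptd : spt d ⊆ Tdet := by
    intro k hk
    by_contra hkT
    have : d k = 0 := by simp [hd, restr, hkT]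
    simp [spt, this] at hk
  have hsptΔ : spt xΔ ⊆ Δ := by
    intro k hk
    by_contra hkT
    have : xΔ k = 0 := by simp [hxΔ, restr, hkT]
    simp [spt, this] at hk
  have hdisj : Disjoint (spt d) (spt xΔ) :=
    Finset.disjoint_of_subset_left hsptd
      (Finset.disjoint_of_subset_right hsptΔ Finset.sdiff_disjoint.symm)
  have hcard1 : (spt d).card ≤ ST := le_trans (Finset.card_le_card hsptd) hT
  have hcard2 : (spt xΔ).card ≤ SΔ := le_trans (Finset.card_le_card hsptΔ) hΔ
  -- main quantities
  set B2 : ℝ := ∑ j, (A.mulVec d) j ^ 2 with hB2def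
  have hB2nn : 0 ≤ B2 := Finset.sum_nonneg fun _ _ => sq_nonneg _
  set b : ℝ := Real.sqrt B2 with hbdef
  set c : ℝ := norm2 d with hcdef
  set e : ℝ := norm2 xΔ with hedef
  have hb0 : 0 ≤ b := Real.sqrt_nonneg _
  have hc0 : 0 ≤ c := Real.sqrt_nonneg _
  have he0 : 0 ≤ e := Real.sqrt_nonneg _
  have hbsq : b ^ 2 = B2 := Real.sq_sqrt hB2nn
  have hcsq : c ^ 2 = ∑ i, d i ^ 2 :=
    Real.sq_sqrt (Finset.sum_nonneg fun _ _ => sq_nonneg _)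
  -- RO bound
  have hRO : |∑ j, (A.mulVec d) j * (A.mulVec xΔ) j| ≤ θ * c * e :=
    hθ.2 d xΔ hdisj hcard1 hcard2
  -- Cauchy-Schwarz for the noise term
  have hCS : |∑ j, (A.mulVec d) j * w j| ≤ b * ε := by
    have h := Finset.sum_mul_sq_le_sq_mul_sq Finset.univ (fun j => (A.mulVec d) j) w
    have hW : 0 ≤ ∑ j, w j ^ 2 := Finset.sum_nonneg fun _ _ => sq_nonneg _
    have habs : |∑ j, (A.mulVec d) j * w j|
        ≤ Real.sqrt (B2 * ∑ j, w j ^ 2) := by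
      rw [← Real.sqrt_sq_eq_abs]
      exact Real.sqrt_le_sqrt h
    have hsplit : Real.sqrt (B2 * ∑ j, w j ^ 2) = b * norm2 w := by
      rw [Real.sqrt_mul hB2nn]; rfl
    rw [hsplit] at habs
    refine le_trans habs ?_
    exact mul_le_mul_of_nonneg_left hw hb0
  -- RIP lower bound
  have hRIPlow : (1 - δ) * c ^ 2 ≤ B2 := by
    rw [hcsq]
    exact (hRIP.2.2 d hcard1).1
  set s : ℝ := Real.sqrt (1 - δ) with hsdef
  have hspos : 0 < s := Real.sqrt_pos.2 (by linarith)
  have hs2 : s ^ 2 = 1 - δ := Real.sq_sqrt (by linarith)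
  have h1 : s * c ≤ b := by
    have : (s * c) ^ 2 ≤ b ^ 2 := by rw [mul_pow, hs2, hbsq]; exact hRIPlow
    nlinarith [mul_nonneg hspos.le hc0]
  -- quadratic inequality
  have h2 : b ^ 2 ≤ θ * c * e + b * ε := by
    have hsum : B2 + (∑ j, (A.mulVec d) j * (A.mulVec xΔ) j)
        + (∑ j, (A.mulVec d) j * w j) = 0 := by
      have h := hNE
      simp only [hr] at h
      calc B2 + (∑ j, (A.mulVec d) j * (A.mulVec xΔ) j)
            + (∑ j, (A.mulVec d) j * w j)
          = ∑ j, (A.mulVec d) j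
              * ((A.mulVec d) j + (A.mulVec xΔ) j + w j) := by
            rw [hB2def, ← Finset.sum_add_distrib, ← Finset.sum_add_distrib]
            exact Finset.sum_congr rfl fun j _ => by ring
        _ = 0 := h
    have ha1 : -(∑ j, (A.mulVec d) j * (A.mulVec xΔ) j)
        ≤ θ * c * e := le_trans (neg_le_abs _) hRO
    have ha2 : -(∑ j, (A.mulVec d) j * w j) ≤ b * ε := le_trans (neg_le_abs _) hCS
    rw [hbsq]; linarith
  have hkey := key_ineq s c b θ e ε hspos hc0 hb0 hθ0 he0 hε h1 h2
  -- convert to the final constant bound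
  have h2s : 1 ≤ Real.sqrt 2 * s := by
    have hsq : (1:ℝ) ≤ (Real.sqrt 2 * s) ^ 2 := by
      rw [mul_pow, Real.sq_sqrt (by norm_num : (0:ℝ) ≤ 2), hs2]; linarith
    nlinarith [mul_nonneg (Real.sqrt_nonneg 2) hspos.le]
  have hcbound : c ≤ Real.sqrt 2 * ε + 2 * θ * e := by
    have hA : s * ε ≤ Real.sqrt 2 * s ^ 2 * ε := by
      nlinarith [mul_le_mul_of_nonneg_right h2s (mul_nonneg hspos.le hε)]
    have hB : θ * e ≤ 2 * s ^ 2 * (θ * e) := by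
      nlinarith [mul_le_mul_of_nonneg_right (by nlinarith : (1:ℝ) ≤ 2 * s ^ 2)
        (mul_nonneg hθ0 he0)]
    have hmul : s ^ 2 * c ≤ s ^ 2 * (Real.sqrt 2 * ε + 2 * θ * e) := by
      have hx : s ^ 2 * (Real.sqrt 2 * ε + 2 * θ * e)
          = Real.sqrt 2 * s ^ 2 * ε + 2 * s ^ 2 * (θ * e) := by ring
      rw [hx]; linarith
    have hs2pos : (0:ℝ) < s ^ 2 := pow_pos hspos 2
    exact le_of_mul_le_mul_left hmul hs2pos
  -- finish
  intro i hiT hxi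
  have hdi : d i = - xdet i := by simp [hd, restr, hiT, hxi]
  have hne : Nonempty (Fin m) := ⟨i⟩
  have hinf : |d i| ≤ normInf d := by
    rw [normInf]
    exact le_ciSup (Set.Finite.bddAbove (Set.finite_range fun k => |d k|)) i
  have hSapos : 0 < Real.sqrt (Sa : ℝ) := by
    apply Real.sqrt_pos.2
    exact_mod_cast Nat.lt_of_lt_of_le Nat.zero_lt_one hSa
  calc |xdet i| = |d i| := by rw [hdi, abs_neg]
    _ ≤ normInf d := hinf
    _ ≤ c / Real.sqrt (Sa : ℝ) := hspread
    _ ≤ (Real.sqrt 2 * ε + 2 * θ * e) / Real.sqrt (Sa : ℝ) := by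
        exact div_le_div_of_nonneg_right hcbound hSapos.le
    _ ≤ αdel := hαdel
end
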